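/- Let Ω ⊂ ℝ^N (N ≥ 2) be a bounded domain with boundary Γ of class C², and let u be the solution of the torsion problem. Then −u(x) ≥ (r_i/2)·δ_Γ(x) for every x ∈ Ω̄, where r_i is the radius of the uniform interior sphere condition of Ω. -/

import Mathlib

open MeasureTheory Metric Set Bornology
open scoped RealInnerProductSpace NNReal ENNReal

noncomputable section

/-- The Laplacian of `u` at `x`, computed in the standard orthonormal basis. -/
def lap {N : ℕ} (u : EuclideanSpace ℝ (Fin N) → ℝ) (x : EuclideanSpace ℝ (Fin N)) : ℝ :=
  ∑ i : Fin N,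
    fderiv ℝ (fun y => fderiv ℝ u y (EuclideanSpace.single i 1)) x (EuclideanSpace.single i 1)

/-- The squared Frobenius norm `|∇²u|²` of the Hessian of `u` at `x`. -/
def hessSq {N : ℕ} (u : EuclideanSpace ℝ (Fin N) → ℝ) (x : EuclideanSpace ℝ (Fin N)) : ℝ :=
  ∑ i : Fin N, ∑ j : Fin N,
    (fderiv ℝ (fun y => fderiv ℝ u y (EuclideanSpace.single j 1)) x
      (EuclideanSpace.single i 1)) ^ 2

/-- The divergence of a vector field `w`. -/
def vdiv {N : ℕ} (w : EuclideanSpace ℝ (Fin N) → EuclideanSpace ℝ (Fin N))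
    (x : EuclideanSpace ℝ (Fin N)) : ℝ :=
  ∑ i : Fin N, fderiv ℝ (fun y => w y i) x (EuclideanSpace.single i 1)

/-- The surface measure: the `(N-1)`-dimensional Hausdorff measure. -/
def surf (N : ℕ) : Measure (EuclideanSpace ℝ (Fin N)) := μH[(N : ℝ) - 1]

/-- `u` solves the torsion problem `Δu = N` in `Ω`, `u = 0` on `Γ = ∂Ω`. -/
def torsion {N : ℕ} (Ω : Set (EuclideanSpace ℝ (Fin N))) (u : EuclideanSpace ℝ (Fin N) → ℝ) :
    Prop :=
  ContDiffOn ℝ 2 u Ω ∧ (∀ x ∈ Ω, lap u x = (N : ℝ)) ∧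
    ContinuousOn u (closure Ω) ∧ ∀ x ∈ frontier Ω, u x = 0

/-- The quadratic polynomial `q(x) = (|x-z|² - a)/2`. -/
def qf {N : ℕ} (z : EuclideanSpace ℝ (Fin N)) (a : ℝ) (x : EuclideanSpace ℝ (Fin N)) : ℝ :=
  (‖x - z‖ ^ 2 - a) / 2

/-- The reference constant `R = N|Ω|/|Γ|`. -/
def RΩ {N : ℕ} (Ω : Set (EuclideanSpace ℝ (Fin N))) : ℝ :=
  N * (volume Ω).toReal / ((surf N) (frontier Ω)).toReal

/-- The reference constant `H₀ = |Γ|/(N|Ω|)`. -/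
def H0 {N : ℕ} (Ω : Set (EuclideanSpace ℝ (Fin N))) : ℝ :=
  ((surf N) (frontier Ω)).toReal / (N * (volume Ω).toReal)

/-- `Ω` has boundary of class `C²`, with outward unit normal field `ν`: near every boundary
point, `Ω` is the sublevel set of a `C²` defining function with nonvanishing gradient, and `ν`
is the normalized gradient of the defining function. -/
def C2Boundary {N : ℕ} (Ω : Set (EuclideanSpace ℝ (Fin N)))
    (ν : EuclideanSpace ℝ (Fin N) → EuclideanSpace ℝ (Fin N)) : Prop :=
  ∀ x ∈ frontier Ω, ∃ (U : Set (EuclideanSpace ℝ (Fin N))) (f : EuclideanSpace ℝ (Fin N) → ℝ),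
    IsOpen U ∧ x ∈ U ∧ ContDiffOn ℝ 2 f U ∧
    (∀ y ∈ U, (y ∈ Ω ↔ f y < 0)) ∧
    ∀ y ∈ U ∩ frontier Ω, gradient f y ≠ 0 ∧ ν y = ‖gradient f y‖⁻¹ • gradient f y

/-- `Ω` has boundary of class `C^{1,α}`, with outward unit normal field `ν`. -/
def C1αBoundary {N : ℕ} (Ω : Set (EuclideanSpace ℝ (Fin N))) (α : ℝ)
    (ν : EuclideanSpace ℝ (Fin N) → EuclideanSpace ℝ (Fin N)) : Prop :=
  ∀ x ∈ frontier Ω, ∃ (U : Set (EuclideanSpace ℝ (Fin N))) (f : EuclideanSpace ℝ (Fin N) → ℝ)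
    (C : ℝ≥0),
    IsOpen U ∧ x ∈ U ∧ ContDiffOn ℝ 1 f U ∧
    HolderOnWith C α.toNNReal (fun y => gradient f y) U ∧
    (∀ y ∈ U, (y ∈ Ω ↔ f y < 0)) ∧
    ∀ y ∈ U ∩ frontier Ω, gradient f y ≠ 0 ∧ ν y = ‖gradient f y‖⁻¹ • gradient f y

/-- `Ω` has boundary of class `C^{0,α}`: near every boundary point, after choosing a direction
`e`, `Ω` is the subgraph of an `α`-Hölder continuous function on the hyperplane orthogonal
to `e`. -/
def HolderBoundary {N : ℕ} (Ω : Set (EuclideanSpace ℝ (Fin N))) (α : ℝ) : Prop :=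
  ∀ x ∈ frontier Ω, ∃ (e : EuclideanSpace ℝ (Fin N)) (r : ℝ)
    (φ : EuclideanSpace ℝ (Fin N) → ℝ) (C : ℝ≥0),
    ‖e‖ = 1 ∧ 0 < r ∧ HolderOnWith C α.toNNReal φ univ ∧
    ∀ y ∈ ball x r, (y ∈ Ω ↔ (inner ℝ y e : ℝ) < φ (y - (inner ℝ y e : ℝ) • e))

/-- `H` is the mean curvature of `∂Ω` (with respect to the inward normal, so that `H = 1/ρ`
for a ball of radius `ρ`): it is given by `div(∇f/|∇f|)/(N-1)` for a local `C²` defining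
function `f` of `Ω`. -/
def meanCurv {N : ℕ} (Ω : Set (EuclideanSpace ℝ (Fin N)))
    (H : EuclideanSpace ℝ (Fin N) → ℝ) : Prop :=
  ∀ x ∈ frontier Ω, ∃ (U : Set (EuclideanSpace ℝ (Fin N))) (f : EuclideanSpace ℝ (Fin N) → ℝ),
    IsOpen U ∧ x ∈ U ∧ ContDiffOn ℝ 2 f U ∧
    (∀ y ∈ U, (y ∈ Ω ↔ f y < 0)) ∧
    (∀ y ∈ U ∩ frontier Ω, gradient f y ≠ 0) ∧
    H x = ((N : ℝ) - 1)⁻¹ * vdiv (fun y => ‖gradient f y‖⁻¹ • gradient f y) x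

/-- `Ω` satisfies the uniform interior sphere condition with radius `r`. -/
def IntSphere {N : ℕ} (Ω : Set (EuclideanSpace ℝ (Fin N))) (r : ℝ) : Prop :=
  0 < r ∧ ∀ p ∈ frontier Ω, ∃ c, ball c r ⊆ Ω ∧ closedBall c r ∩ frontier Ω = {p}

/-- `Ω` satisfies the uniform exterior sphere condition with radius `r`. -/
def ExtSphere {N : ℕ} (Ω : Set (EuclideanSpace ℝ (Fin N))) (r : ℝ) : Prop :=
  0 < r ∧ ∀ p ∈ frontier Ω, ∃ c, ball c r ⊆ (closure Ω)ᶜ ∧ closedBall c r ∩ frontier Ω = {p}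

/-- `v` is harmonic in `Ω`. -/
def HarmOn {N : ℕ} (Ω : Set (EuclideanSpace ℝ (Fin N))) (v : EuclideanSpace ℝ (Fin N) → ℝ) :
    Prop :=
  ContDiffOn ℝ 2 v Ω ∧ ∀ x ∈ Ω, lap v x = 0

/-- The best constant `μ_α(Ω)` (with base point `x₀`) in the Hardy–Poincaré inequality
`∫_Ω v² ≤ μ_α(Ω)⁻¹ ∫_Ω |∇v|² δ_Γ^{2α}` over `W^{1,2}` functions harmonic in `Ω`
vanishing at `x₀`. -/
def muHP {N : ℕ} (Ω : Set (EuclideanSpace ℝ (Fin N))) (x₀ : EuclideanSpace ℝ (Fin N))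
    (α : ℝ) : ℝ :=
  sInf { r | ∃ v : EuclideanSpace ℝ (Fin N) → ℝ, HarmOn Ω v ∧ v x₀ = 0 ∧
    IntegrableOn (fun x => (v x) ^ 2) Ω ∧
    IntegrableOn (fun x => ‖gradient v x‖ ^ 2 * infDist x (frontier Ω) ^ (2 * α)) Ω ∧
    (∫ x in Ω, (v x) ^ 2) = 1 ∧
    r = ∫ x in Ω, ‖gradient v x‖ ^ 2 * infDist x (frontier Ω) ^ (2 * α) }

/-- The best constant `μ̄(Ω)` in the Poincaré inequality `∫_Ω v² ≤ μ̄(Ω)⁻¹ ∫_Ω |∇v|²` over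
`W^{1,2}` functions harmonic in `Ω` with zero mean on `Ω`. -/
def muBar {N : ℕ} (Ω : Set (EuclideanSpace ℝ (Fin N))) : ℝ :=
  sInf { r | ∃ v : EuclideanSpace ℝ (Fin N) → ℝ, HarmOn Ω v ∧ (∫ x in Ω, v x) = 0 ∧
    IntegrableOn (fun x => (v x) ^ 2) Ω ∧
    IntegrableOn (fun x => ‖gradient v x‖ ^ 2) Ω ∧
    (∫ x in Ω, (v x) ^ 2) = 1 ∧
    r = ∫ x in Ω, ‖gradient v x‖ ^ 2 }

/-- `M = max_{Ω̄} |∇u|`. -/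
def Mgrad {N : ℕ} (Ω : Set (EuclideanSpace ℝ (Fin N))) (u : EuclideanSpace ℝ (Fin N) → ℝ) :
    ℝ :=
  ⨆ x ∈ closure Ω, ‖gradient u x‖

/-- `ρ_i = min_{x ∈ Γ} |x - z|`. -/
def rhoi {N : ℕ} (Ω : Set (EuclideanSpace ℝ (Fin N))) (z : EuclideanSpace ℝ (Fin N)) : ℝ :=
  infDist z (frontier Ω)

/-- `ρ_e = max_{x ∈ Γ} |x - z|`. -/
def rhoe {N : ℕ} (Ω : Set (EuclideanSpace ℝ (Fin N))) (z : EuclideanSpace ℝ (Fin N)) : ℝ :=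
  ⨆ x ∈ frontier Ω, dist x z

/-- The (Fraenkel-type) asymmetry `A(Ω) = inf_x |Ω Δ B_R(x)| / |B_R(x)|`. -/
def asym {N : ℕ} (Ω : Set (EuclideanSpace ℝ (Fin N))) : ℝ :=
  sInf { m | ∃ x : EuclideanSpace ℝ (Fin N),
    m = (volume (symmDiff Ω (ball x (RΩ Ω)))).toReal / (volume (ball x (RΩ Ω))).toReal }


/-!
Comparison with paraboloids. By the weak maximum principle (a strictly subharmonic function has
no interior maximum, by the second-derivative test along the coordinate lines), `u ≤ 0` on `Ω̄`,
and on every ball `B(c, r) ⊆ Ω` the solution lies below `(|x - c|² - r²)/2`, the torsion function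
of that ball. Let `x ∈ Ω` have distance `δ` to its nearest boundary point `p`. If `δ ≥ r_i`, the
ball `B(x, δ)` gives `u(x) ≤ -δ²/2 ≤ -r_i δ/2`. Otherwise `B(x, δ)` and the interior ball
`B(c, r_i)` at `p` both touch `Γ` at `p`; since `Γ` is `C¹` there, both centres lie on the inward
normal, so `|x - c| = r_i - δ` and `u(x) ≤ ((r_i - δ)² - r_i²)/2 ≤ -r_i δ/2`.
-/

open Filter Topology

section SecondDerivative

variable {E : Type*} [NormedAddCommGroup E] [NormedSpace ℝ E] {w : E → ℝ} {x : E}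

lemma ContDiffAt.eventually_differentiableAt (hw : ContDiffAt ℝ 2 w x) :
    ∀ᶠ y in 𝓝 x, DifferentiableAt ℝ w y :=
  (hw.eventually (by simp)).mono fun _ hy => hy.differentiableAt (by norm_num)

lemma ContDiffAt.differentiableAt_fderiv_apply (hw : ContDiffAt ℝ 2 w x) (v : E) :
    DifferentiableAt ℝ (fun y => fderiv ℝ w y v) x :=
  ((hw.fderiv_right (m := 1) (by norm_num)).differentiableAt (by norm_num)).clm_apply
    (differentiableAt_const v)

lemma deriv_deriv_nonpos_of_isLocalMax {g : ℝ → ℝ} {t : ℝ} (hmax : IsLocalMax g t)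
    (hg : ContinuousAt g t) : deriv (deriv g) t ≤ 0 := by
  by_contra! hpos
  have hmin := isLocalMin_of_deriv_deriv_pos hpos hmax.deriv_eq_zero hg
  have hconst : g =ᶠ[𝓝 t] fun _ => g t := by
    filter_upwards [hmax, hmin] with s hs₁ hs₂ using le_antisymm hs₁ hs₂
  have hderiv : deriv g =ᶠ[𝓝 t] fun _ => 0 := by
    filter_upwards [hconst.eventuallyEq_nhds] with s hs
    rw [hs.deriv_eq, deriv_const]
  rw [hderiv.deriv_eq, deriv_const] at hpos
  exact hpos.false

lemma fderiv_fderiv_apply_nonpos_of_isLocalMax (hw : ContDiffAt ℝ 2 w x) (hmax : IsLocalMax w x)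
    (v : E) : fderiv ℝ (fun y => fderiv ℝ w y v) x v ≤ 0 := by
  set ℓ : ℝ → E := fun s => x + s • v
  have hℓ : ∀ s, HasDerivAt ℓ v s := fun s =>
    (((hasDerivAt_id s).smul_const v).const_add x).congr_deriv (one_smul ℝ v)
  have hℓc : Continuous ℓ := by fun_prop
  have hℓ0 : ℓ 0 = x := by simp [ℓ]
  rw [← hℓ0] at hw hmax ⊢
  have hderiv : deriv (w ∘ ℓ) =ᶠ[𝓝 0] (fun y => fderiv ℝ w y v) ∘ ℓ := by
    filter_upwards [hℓc.continuousAt.eventually hw.eventually_differentiableAt] with s hs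
    exact (hs.hasFDerivAt.comp_hasDerivAt s (hℓ s)).deriv
  rw [← ((hw.differentiableAt_fderiv_apply v).hasFDerivAt.comp_hasDerivAt 0 (hℓ 0)).deriv,
    ← hderiv.deriv_eq]
  exact deriv_deriv_nonpos_of_isLocalMax (hmax.comp_continuous hℓc.continuousAt)
    (hw.continuousAt.comp hℓc.continuousAt)

end SecondDerivative

section Laplacian

variable {N : ℕ}

lemma lap_nonpos_of_isLocalMax {w : EuclideanSpace ℝ (Fin N) → ℝ} {x : EuclideanSpace ℝ (Fin N)}
    (hw : ContDiffAt ℝ 2 w x) (hmax : IsLocalMax w x) : lap w x ≤ 0 :=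
  Finset.sum_nonpos fun _ _ => fderiv_fderiv_apply_nonpos_of_isLocalMax hw hmax _

lemma nonpos_of_lap_pos {K O : Set (EuclideanSpace ℝ (Fin N))} {w : EuclideanSpace ℝ (Fin N) → ℝ}
    (hK : IsCompact K) (hO : IsOpen O) (hOK : O ⊆ K) (hwK : ContinuousOn w K)
    (hwO : ContDiffOn ℝ 2 w O) (hlap : ∀ y ∈ O, 0 < lap w y) (hbd : ∀ y ∈ K \ O, w y ≤ 0)
    {y : EuclideanSpace ℝ (Fin N)} (hy : y ∈ K) : w y ≤ 0 := by
  obtain ⟨y₀, hy₀, hmax⟩ := hK.exists_isMaxOn ⟨y, hy⟩ hwK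
  refine (hmax hy).trans ?_
  by_cases hy₀O : y₀ ∈ O
  · have hO₀ : O ∈ 𝓝 y₀ := hO.mem_nhds hy₀O
    exact absurd (lap_nonpos_of_isLocalMax (hwO.contDiffAt hO₀)
      (hmax.isLocalMax (mem_of_superset hO₀ hOK))) (hlap y₀ hy₀O).not_ge
  · exact hbd y₀ ⟨hy₀, hy₀O⟩

lemma lap_sub_const_mul {u q : EuclideanSpace ℝ (Fin N) → ℝ} {x : EuclideanSpace ℝ (Fin N)}
    (hu : ContDiffAt ℝ 2 u x) (hq : ContDiffAt ℝ 2 q x) (b : ℝ) :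
    lap (fun y => u y - b * q y) x = lap u x - b * lap q x := by
  simp only [lap, Finset.mul_sum, ← Finset.sum_sub_distrib]
  refine Finset.sum_congr rfl fun i _ => ?_
  set e := EuclideanSpace.single i (1 : ℝ)
  have hfirst : (fun y => fderiv ℝ (fun y => u y - b * q y) y e) =ᶠ[𝓝 x]
      fun y => fderiv ℝ u y e - b * fderiv ℝ q y e := by
    filter_upwards [hu.eventually_differentiableAt, hq.eventually_differentiableAt]
      with y huy hqy
    rw [fderiv_fun_sub huy (hqy.const_mul b), fderiv_const_mul hqy]
    simp
  have hue := hu.differentiableAt_fderiv_apply e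
  have hqe := hq.differentiableAt_fderiv_apply e
  rw [hfirst.fderiv_eq, fderiv_fun_sub hue (hqe.const_mul b), fderiv_const_mul hqe]
  simp

lemma contDiff_qf (z : EuclideanSpace ℝ (Fin N)) (a : ℝ) : ContDiff ℝ 2 (qf z a) :=
  (((contDiff_id.sub contDiff_const).norm_sq ℝ).sub contDiff_const).div_const 2

lemma fderiv_qf_apply (z : EuclideanSpace ℝ (Fin N)) (a : ℝ) (y v : EuclideanSpace ℝ (Fin N)) :
    fderiv ℝ (qf z a) y v = ⟪y - z, v⟫ := by
  have h := ((((hasFDerivAt_id y).sub_const z).norm_sq).sub_const a).mul_const (2⁻¹ : ℝ)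
  rw [show qf z a = fun x => (‖id x - z‖ ^ 2 - a) * 2⁻¹ by ext; simp [qf, div_eq_mul_inv],
    h.fderiv]
  simp [inner_sub_left]

lemma lap_qf (z : EuclideanSpace ℝ (Fin N)) (a : ℝ) (x : EuclideanSpace ℝ (Fin N)) :
    lap (qf z a) x = N := by
  have hunit : ∀ i : Fin N, fderiv ℝ (fun y => fderiv ℝ (qf z a) y (EuclideanSpace.single i 1)) x
      (EuclideanSpace.single i 1) = 1 := fun i => by
    set e := EuclideanSpace.single i (1 : ℝ)
    simp only [fderiv_qf_apply]
    rw [fderiv_inner_apply ℝ (by fun_prop) (differentiableAt_const e)]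
    simp [e, fderiv_sub_const]
  simp [lap, hunit]

end Laplacian

section Comparison

variable {N : ℕ}

lemma le_qf_of_lap_eq (hN : 0 < N) {u : EuclideanSpace ℝ (Fin N) → ℝ}
    {c : EuclideanSpace ℝ (Fin N)} {r : ℝ} (hu : ContDiffOn ℝ 2 u (ball c r))
    (hlap : ∀ y ∈ ball c r, lap u y = N) (hcont : ContinuousOn u (closedBall c r))
    (hsphere : ∀ y ∈ sphere c r, u y ≤ 0) {x : EuclideanSpace ℝ (Fin N)}
    (hx : x ∈ closedBall c r) : u x ≤ qf c (r ^ 2) x := by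
  have hq := contDiff_qf c (r ^ 2)
  -- `lap (u - q) = 0` only, so compare with the strictly subharmonic `u - (1 - ε) q`.
  have hperturbed : ∀ ε > 0, u x ≤ (1 - ε) * qf c (r ^ 2) x := fun ε hε => by
    have hw := nonpos_of_lap_pos (w := fun y => u y - (1 - ε) * qf c (r ^ 2) y)
      (isCompact_closedBall c r) isOpen_ball ball_subset_closedBall
      (hcont.sub (continuous_const.mul hq.continuous).continuousOn)
      (hu.sub (contDiff_const.mul hq).contDiffOn)
      (fun y hy => by
        rw [lap_sub_const_mul (hu.contDiffAt (isOpen_ball.mem_nhds hy)) hq.contDiffAt,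
          hlap y hy, lap_qf]
        have : (0 : ℝ) < N := by exact_mod_cast hN
        nlinarith)
      (fun y hy => by
        rw [closedBall_sdiff_ball] at hy
        simp [qf, ← dist_eq_norm, mem_sphere.1 hy, hsphere y hy])
      hx
    linarith
  have hlim : Tendsto (fun ε : ℝ => (1 - ε) * qf c (r ^ 2) x) (𝓝[>] 0) (𝓝 (qf c (r ^ 2) x)) :=
    ((continuous_const.sub continuous_id).mul continuous_const).tendsto' _ _ (by simp)
      |>.mono_left nhdsWithin_le_nhds
  exact ge_of_tendsto hlim (eventually_nhdsWithin_of_forall hperturbed)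

variable {Ω : Set (EuclideanSpace ℝ (Fin N))} {u : EuclideanSpace ℝ (Fin N) → ℝ}

lemma torsion.nonpos (hN : 0 < N) (hΩo : IsOpen Ω) (hΩb : IsBounded Ω) (hu : torsion Ω u)
    {y : EuclideanSpace ℝ (Fin N)} (hy : y ∈ closure Ω) : u y ≤ 0 := by
  obtain ⟨hu2, hlap, hcont, hzero⟩ := hu
  exact nonpos_of_lap_pos hΩb.isCompact_closure hΩo subset_closure hcont hu2
    (fun z hz => by rw [hlap z hz]; exact_mod_cast hN)
    (fun z hz => (hzero z (hΩo.frontier_eq ▸ hz)).le) hy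

lemma torsion.le_qf (hN : 0 < N) (hΩo : IsOpen Ω) (hΩb : IsBounded Ω) (hu : torsion Ω u)
    {c : EuclideanSpace ℝ (Fin N)} {r : ℝ} (hr : 0 < r) (hball : ball c r ⊆ Ω)
    {x : EuclideanSpace ℝ (Fin N)} (hx : x ∈ ball c r) : u x ≤ qf c (r ^ 2) x := by
  have hcl : closedBall c r ⊆ closure Ω := closure_ball c hr.ne' ▸ closure_mono hball
  have hsphere : ∀ y ∈ sphere c r, u y ≤ 0 := fun y hy =>
    hu.nonpos hN hΩo hΩb (hcl (sphere_subset_closedBall hy))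
  obtain ⟨hu2, hlap, hcont, -⟩ := hu
  exact le_qf_of_lap_eq hN (hu2.mono hball) (fun y hy => hlap y (hball hy)) (hcont.mono hcl)
    hsphere (ball_subset_closedBall hx)

end Comparison

lemma nonpos_of_mem_closure {X : Type*} [TopologicalSpace X] {Ω U : Set X} {f : X → ℝ} {y : X}
    (hf : ContinuousAt f y) (hU : U ∈ 𝓝 y) (hΩf : ∀ z ∈ U ∩ Ω, f z ≤ 0) (hy : y ∈ closure Ω) :
    f y ≤ 0 := by
  have : (𝓝[Ω] y).NeBot := mem_closure_iff_nhdsWithin_neBot.mp hy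
  refine le_of_tendsto (hf.tendsto.mono_left (nhdsWithin_le_nhds (s := Ω))) ?_
  filter_upwards [self_mem_nhdsWithin, nhdsWithin_le_nhds hU] with z hzΩ hzU
  exact hΩf z ⟨hzU, hzΩ⟩

section DistanceToBoundary

variable {E : Type*} [NormedAddCommGroup E] [NormedSpace ℝ E] {Ω : Set E} {x : E}

lemma ball_infDist_frontier_subset (hΩo : IsOpen Ω) (hx : x ∈ Ω) :
    ball x (infDist x (frontier Ω)) ⊆ Ω := by
  rcases le_or_gt (infDist x (frontier Ω)) 0 with hδ | hδ
  · simp [ball_eq_empty.2 hδ]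
  refine (convex_ball _ _).isPreconnected.subset_of_closure_inter_subset hΩo
    ⟨x, mem_ball_self hδ, hx⟩ ?_
  rintro y ⟨hycl, hyb⟩
  by_contra hyΩ
  exact ball_infDist_subset_compl hyb (hΩo.frontier_eq ▸ ⟨hycl, hyΩ⟩ : y ∈ frontier Ω)

lemma exists_mem_frontier_infDist_eq_dist [Nontrivial E] [ProperSpace E]
    (hΩb : IsBounded Ω) (hx : x ∈ Ω) : ∃ p ∈ frontier Ω, infDist x (frontier Ω) = dist x p :=
  (hΩb.isCompact_closure.of_isClosed_subset isClosed_frontier frontier_subset_closure)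
    |>.exists_infDist_eq_dist
      (nonempty_frontier_iff.2 ⟨⟨x, hx⟩, fun h => NormedSpace.unbounded_univ ℝ E (h ▸ hΩb)⟩) x

end DistanceToBoundary

section InteriorBall

variable {E : Type*} [NormedAddCommGroup E] [InnerProductSpace ℝ E] [CompleteSpace E]

lemma eq_sub_smul_gradient_of_ball_subset {Ω U : Set E} {f : E → ℝ} {p z : E} {ρ : ℝ}
    (hΩo : IsOpen Ω) (hU : IsOpen U) (hpU : p ∈ U) (hfU : ContinuousOn f U)
    (hfp : DifferentiableAt ℝ f p) (hΩf : ∀ y ∈ U, y ∈ Ω ↔ f y < 0) (hp : p ∈ frontier Ω)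
    (hg : gradient f p ≠ 0) (hρ : 0 < ρ) (hball : ball z ρ ⊆ Ω) (hpz : dist p z = ρ) :
    z = p - ρ • (‖gradient f p‖⁻¹ • gradient f p) := by
  set g := gradient f p
  have hpΩ : p ∉ Ω := (disjoint_frontier_iff_isOpen.2 hΩo).notMem_of_mem_left hp
  have hclosure : ∀ y ∈ U, y ∈ closure Ω → f y ≤ 0 := fun y hyU hy =>
    nonpos_of_mem_closure (hfU.continuousAt (hU.mem_nhds hyU)) (hU.mem_nhds hyU)
      (fun z hz => ((hΩf z hz.1).1 hz.2).le) hy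
  have hfp0 : f p = 0 := le_antisymm (hclosure p hpU (frontier_subset_closure hp))
    (not_lt.1 fun h => hpΩ ((hΩf p hpU).2 h))
  have hcl : closedBall z ρ ⊆ closure Ω := closure_ball z hρ.ne' ▸ closure_mono hball
  have hmax : IsLocalMaxOn f (closedBall z ρ) p := by
    filter_upwards [nhdsWithin_le_nhds (hU.mem_nhds hpU), self_mem_nhdsWithin] with y hyU hy
    rw [hfp0]
    exact hclosure y hyU (hcl hy)
  -- the first-order condition at the point `y` of the sphere in the direction `∇f p` forces
  -- `∇f p` to point from `z` to `p`
  set y := z + ρ • (‖g‖⁻¹ • g)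
  have hy : y ∈ closedBall z ρ := by
    simp [y, norm_smul, abs_of_pos hρ, inv_mul_cancel₀ (norm_ne_zero_iff.2 hg)]
  have hderiv : ⟪g, y - p⟫ ≤ 0 := by
    rw [show ⟪g, y - p⟫ = fderiv ℝ f p (y - p) from InnerProductSpace.toDual_symm_apply]
    exact hmax.hasFDerivWithinAt_nonpos hfp.hasFDerivAt.hasFDerivWithinAt
      (sub_mem_posTangentConeAt_of_segment_subset
        ((convex_closedBall z ρ).segment_subset hpz.le hy))
  have hzp : ‖z - p‖ = ρ := by rw [← dist_eq_norm, dist_comm, hpz]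
  have hcs : ⟪-g, z - p⟫ = ‖-g‖ * ‖z - p‖ := by
    refine le_antisymm (real_inner_le_norm _ _) ?_
    have hexpand : ⟪g, y - p⟫ = ⟪g, z - p⟫ + ρ * ‖g‖ := by
      rw [show y - p = (z - p) + ρ • (‖g‖⁻¹ • g) by simp only [y]; abel, inner_add_right,
        real_inner_smul_right, real_inner_smul_right, real_inner_self_eq_norm_sq]
      field_simp
    rw [norm_neg, hzp, inner_neg_left]
    linarith
  have hcol := inner_eq_norm_mul_iff_real.1 hcs
  rw [hzp, norm_neg] at hcol
  have hz : z - p = ‖g‖⁻¹ • (ρ • -g) := (eq_inv_smul_iff₀ (norm_ne_zero_iff.2 hg)).2 hcol.symm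
  linear_combination (norm := module) hz

end InteriorBall

section Boundary

variable {N : ℕ} {Ω : Set (EuclideanSpace ℝ (Fin N))} {p : EuclideanSpace ℝ (Fin N)}

lemma IntSphere.exists_ball_subset_dist_eq {r : ℝ} (h : IntSphere Ω r) (hΩo : IsOpen Ω)
    (hp : p ∈ frontier Ω) : ∃ c, ball c r ⊆ Ω ∧ dist p c = r := by
  obtain ⟨c, hc, htouch⟩ := h.2 p hp
  have hpc : p ∈ closedBall c r := (htouch ▸ rfl : p ∈ closedBall c r ∩ frontier Ω).1
  have hpΩ : p ∉ Ω := (disjoint_frontier_iff_isOpen.2 hΩo).notMem_of_mem_left hp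
  exact ⟨c, hc, le_antisymm hpc (not_lt.1 fun hlt => hpΩ (hc (mem_ball.2 hlt)))⟩

lemma C2Boundary.dist_eq_abs_sub_of_ball_subset
    {ν : EuclideanSpace ℝ (Fin N) → EuclideanSpace ℝ (Fin N)} (hbd : C2Boundary Ω ν)
    (hΩo : IsOpen Ω) (hp : p ∈ frontier Ω)
    {z₁ z₂ : EuclideanSpace ℝ (Fin N)} {r₁ r₂ : ℝ} (hr₁ : 0 < r₁) (h₁ : ball z₁ r₁ ⊆ Ω)
    (hp₁ : dist p z₁ = r₁) (hr₂ : 0 < r₂) (h₂ : ball z₂ r₂ ⊆ Ω) (hp₂ : dist p z₂ = r₂) :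
    dist z₁ z₂ = |r₁ - r₂| := by
  obtain ⟨U, f, hU, hpU, hf, hΩf, hgrad⟩ := hbd p hp
  have hfp : DifferentiableAt ℝ f p :=
    (hf.contDiffAt (hU.mem_nhds hpU)).differentiableAt (by norm_num)
  have hg := (hgrad p ⟨hpU, hp⟩).1
  rw [eq_sub_smul_gradient_of_ball_subset hΩo hU hpU hf.continuousOn hfp hΩf hp hg hr₁ h₁ hp₁,
    eq_sub_smul_gradient_of_ball_subset hΩo hU hpU hf.continuousOn hfp hΩf hp hg hr₂ h₂ hp₂,
    dist_eq_norm, sub_sub_sub_cancel_left, ← sub_smul, norm_smul, norm_smul, norm_inv, norm_norm,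
    inv_mul_cancel₀ (norm_ne_zero_iff.2 hg), mul_one, Real.norm_eq_abs, abs_sub_comm]

end Boundary

theorem stmt6_general {N : ℕ} (hN : 2 ≤ N) (Ω : Set (EuclideanSpace ℝ (Fin N)))
    (hΩo : IsOpen Ω) (hΩb : IsBounded Ω)
    (ν : EuclideanSpace ℝ (Fin N) → EuclideanSpace ℝ (Fin N)) (hbd : C2Boundary Ω ν)
    (ri : ℝ) (hri : IntSphere Ω ri)
    (u : EuclideanSpace ℝ (Fin N) → ℝ) (hu : torsion Ω u) :
    ∀ x ∈ closure Ω, -(u x) ≥ (ri / 2) * infDist x (frontier Ω) := by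
  have hN₀ : 0 < N := by omega
  have : Nontrivial (EuclideanSpace ℝ (Fin N)) := by
    have : NeZero N := ⟨hN₀.ne'⟩
    infer_instance
  intro x hx
  by_cases hxΩ : x ∈ Ω
  swap
  · have hxΓ : x ∈ frontier Ω := hΩo.frontier_eq ▸ ⟨hx, hxΩ⟩
    simp [hu.2.2.2 x hxΓ, infDist_zero_of_mem hxΓ]
  obtain ⟨p, hp, hδ⟩ := exists_mem_frontier_infDist_eq_dist hΩb hxΩ
  set δ := infDist x (frontier Ω)
  have hδpos : 0 < δ := hδ ▸ dist_pos.2 fun h =>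
    (disjoint_frontier_iff_isOpen.2 hΩo).notMem_of_mem_left (h ▸ hp) hxΩ
  have hxball : ball x δ ⊆ Ω := ball_infDist_frontier_subset hΩo hxΩ
  rcases le_or_gt ri δ with hle | hlt
  · have hux := hu.le_qf hN₀ hΩo hΩb hδpos hxball (mem_ball_self hδpos)
    simp only [qf, sub_self, norm_zero] at hux
    nlinarith [hri.1]
  · obtain ⟨c, hc, hpc⟩ := hri.exists_ball_subset_dist_eq hΩo hp
    have hxc : dist x c = ri - δ := by
      rw [hbd.dist_eq_abs_sub_of_ball_subset hΩo hp hδpos hxball (by rw [dist_comm, hδ]) hri.1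
        hc hpc, abs_sub_comm, abs_of_pos (sub_pos.2 hlt)]
    have hux := hu.le_qf hN₀ hΩo hΩb hri.1 hc (mem_ball.2 (by rw [hxc]; linarith))
    simp only [qf, ← dist_eq_norm, hxc] at hux
    nlinarith

theorem stmt6 {N : ℕ} (hN : 2 ≤ N) (Ω : Set (EuclideanSpace ℝ (Fin N)))
    (hΩo : IsOpen Ω) (hΩb : IsBounded Ω) (hΩc : IsConnected Ω)
    (ν : EuclideanSpace ℝ (Fin N) → EuclideanSpace ℝ (Fin N)) (hbd : C2Boundary Ω ν)
    (ri : ℝ) (hri : IntSphere Ω ri)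
    (u : EuclideanSpace ℝ (Fin N) → ℝ) (hu : torsion Ω u) :
    ∀ x ∈ closure Ω, -(u x) ≥ (ri / 2) * infDist x (frontier Ω) :=
  stmt6_general hN Ω hΩo hΩb ν hbd ri hri u hu

end
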